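/- Let M_n be a sequence of mechanisms each satisfying f-DP (i.e., T(M_n(D), M_n(D')) ≥ f for all adjacent D, D'), and suppose M_n(D) → M(D) in total variation for every database D. Then M satisfies f-DP. -/

import Mathlib

open MeasureTheory Real Set Filter

/-- The tradeoff function `T(P,Q)(α) = inf {1 - E_Q φ : φ a test with E_P φ ≥ 1 - α}`. -/
noncomputable def tradeoff {Ω : Type*} [MeasurableSpace Ω] (P Q : Measure Ω) (α : ℝ) : ℝ :=
  sInf { r : ℝ | ∃ φ : Ω → ℝ, Measurable φ ∧ (∀ x, φ x ∈ Icc (0:ℝ) 1) ∧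
    1 - α ≤ ∫ x, φ x ∂P ∧ r = 1 - ∫ x, φ x ∂Q }

/-- `f` is (the restriction to `[0,1]` of) a tradeoff function: convex, continuous,
non-decreasing, with `0 ≤ f x ≤ x` on `[0,1]`. -/
def IsTradeoff (f : ℝ → ℝ) : Prop :=
  ConvexOn ℝ (Icc 0 1) f ∧ ContinuousOn f (Icc 0 1) ∧ MonotoneOn f (Icc 0 1) ∧
  (∀ x ∈ Icc (0:ℝ) 1, 0 ≤ f x ∧ f x ≤ x)

/-- A symmetric tradeoff function: `f = T(P,Q) = T(Q,P)` for some distributions. -/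
def IsSymmTradeoff (f : ℝ → ℝ) : Prop :=
  ∃ P Q : Measure ℝ, IsProbabilityMeasure P ∧ IsProbabilityMeasure Q ∧
    (∀ α ∈ Icc (0:ℝ) 1, f α = tradeoff P Q α) ∧ (∀ α ∈ Icc (0:ℝ) 1, f α = tradeoff Q P α)

/-- Nontrivial tradeoff function: `f α < α` somewhere on `(0,1)`. -/
def Nontrivial' (f : ℝ → ℝ) : Prop := ∃ α ∈ Ioo (0:ℝ) 1, f α < α

/-- Generalized inverse (quantile function) of a cdf. -/
noncomputable def qf (F : ℝ → ℝ) (α : ℝ) : ℝ := sInf {x : ℝ | α ≤ F x}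

/-- `F` (with law `μ`) is a canonical noise distribution for `f`. -/
def IsCND (f : ℝ → ℝ) (μ : Measure ℝ) (F : ℝ → ℝ) : Prop :=
  IsProbabilityMeasure μ ∧ Continuous F ∧ (∀ x, F x = (μ (Iic x)).toReal) ∧
  (∀ m ∈ Icc (0:ℝ) 1, ∀ α ∈ Icc (0:ℝ) 1, f α ≤ tradeoff μ (μ.map (· + m)) α) ∧
  (∀ α ∈ Ioo (0:ℝ) 1, tradeoff μ (μ.map (· + 1)) α = f α) ∧
  (∀ α ∈ Ioo (0:ℝ) 1, tradeoff μ (μ.map (· + 1)) α = F (qf F α - 1)) ∧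
  (∀ x : ℝ, F x = 1 - F (-x))

/-- Uniform probability measure on the interval `(a,b)`. -/
noncomputable def unif (a b : ℝ) : Measure ℝ :=
  (ENNReal.ofReal (b - a))⁻¹ • volume.restrict (Ioo a b)

/-- A nonnegative log-concave function on `ℝ`. -/
def LogConcaveFn (g : ℝ → ℝ) : Prop :=
  (∀ x, 0 ≤ g x) ∧ ∀ x y θ : ℝ, 0 ≤ θ → θ ≤ 1 →
    g x ^ θ * g y ^ (1 - θ) ≤ g (θ * x + (1 - θ) * y)

/-- Total variation distance `sup_A |P(A) - Q(A)|`. -/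
noncomputable def tvDist {Ω : Type*} [MeasurableSpace Ω] (P Q : Measure Ω) : ℝ :=
  ⨆ A : {A : Set Ω // MeasurableSet A}, |(P A.1).toReal - (Q A.1).toReal|
section AuxTV

variable {Ω : Type*} [MeasurableSpace Ω]

lemma tvDist_bddAbove (P Q : Measure Ω) [IsProbabilityMeasure P] [IsProbabilityMeasure Q] :
    BddAbove (Set.range fun A : {A : Set Ω // MeasurableSet A} =>
      |(P A.1).toReal - (Q A.1).toReal|) := by
  refine ⟨2, ?_⟩
  rintro x ⟨A, rfl⟩
  have h1 : (P A.1).toReal ≤ 1 := by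
    have := ENNReal.toReal_mono (measure_ne_top P univ) (measure_mono (subset_univ A.1))
    simpa using this
  have h2 : (Q A.1).toReal ≤ 1 := by
    have := ENNReal.toReal_mono (measure_ne_top Q univ) (measure_mono (subset_univ A.1))
    simpa using this
  have h3 : 0 ≤ (P A.1).toReal := ENNReal.toReal_nonneg
  have h4 : 0 ≤ (Q A.1).toReal := ENNReal.toReal_nonneg
  rw [abs_le]
  constructor <;> linarith

lemma le_tvDist (P Q : Measure Ω) [IsProbabilityMeasure P] [IsProbabilityMeasure Q]
    {A : Set Ω} (hA : MeasurableSet A) :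
    |(P A).toReal - (Q A).toReal| ≤ tvDist P Q :=
  le_ciSup (tvDist_bddAbove P Q) ⟨A, hA⟩

lemma tvDist_nonneg (P Q : Measure Ω) [IsProbabilityMeasure P] [IsProbabilityMeasure Q] :
    0 ≤ tvDist P Q := by
  have := le_tvDist P Q MeasurableSet.empty
  simpa using this

lemma tvDist_comm (P Q : Measure Ω) : tvDist P Q = tvDist Q P := by
  unfold tvDist
  congr 1
  funext A
  rw [abs_sub_comm]

lemma test_integrable (P : Measure Ω) [IsProbabilityMeasure P] {φ : Ω → ℝ}
    (hm : Measurable φ) (hφ : ∀ x, φ x ∈ Icc (0:ℝ) 1) : Integrable φ P :=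
  (integrable_const (1:ℝ)).mono' hm.aestronglyMeasurable
    (ae_of_all _ fun x => by
      rw [Real.norm_eq_abs, abs_of_nonneg (hφ x).1]; exact (hφ x).2)

lemma test_integral_le_one (P : Measure Ω) [IsProbabilityMeasure P] {φ : Ω → ℝ}
    (hm : Measurable φ) (hφ : ∀ x, φ x ∈ Icc (0:ℝ) 1) : ∫ x, φ x ∂P ≤ 1 := by
  have := integral_mono (test_integrable P hm hφ) (integrable_const (1:ℝ))
    (fun x => (hφ x).2)
  simpa using this

lemma integral_le_add_tvDist (P Q : Measure Ω) [IsProbabilityMeasure P] [IsProbabilityMeasure Q]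
    {φ : Ω → ℝ} (hm : Measurable φ) (hφ : ∀ x, φ x ∈ Icc (0:ℝ) 1) :
    ∫ x, φ x ∂P ≤ (∫ x, φ x ∂Q) + tvDist P Q := by
  have hnn : ∀ (μ : Measure Ω), 0 ≤ᵐ[μ] φ := fun μ => ae_of_all _ fun x => (hφ x).1
  have hbd : ∀ (μ : Measure Ω), φ ≤ᵐ[μ] fun _ => (1:ℝ) := fun μ => ae_of_all _ fun x => (hφ x).2
  rw [(test_integrable P hm hφ).integral_eq_integral_Ioc_meas_le (hnn P) (hbd P),
    (test_integrable Q hm hφ).integral_eq_integral_Ioc_meas_le (hnn Q) (hbd Q)]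
  have meas_g : ∀ (μ : Measure Ω), Measurable fun t : ℝ => (μ {a | t ≤ φ a}).toReal := by
    intro μ
    apply Measurable.ennreal_toReal
    exact Antitone.measurable fun s t hst => measure_mono fun a ha => hst.trans ha
  have bdd_g : ∀ (μ : Measure Ω) [IsProbabilityMeasure μ], ∀ t : ℝ,
      ‖(μ {a | t ≤ φ a}).toReal‖ ≤ 1 := by
    intro μ _ t
    rw [Real.norm_eq_abs, abs_of_nonneg ENNReal.toReal_nonneg]
    have := ENNReal.toReal_mono (measure_ne_top μ univ) (measure_mono (subset_univ {a | t ≤ φ a}))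
    simpa using this
  have int_g : ∀ (μ : Measure Ω) [IsProbabilityMeasure μ],
      IntegrableOn (fun t : ℝ => (μ {a | t ≤ φ a}).toReal) (Ioc 0 1) volume := by
    intro μ _
    exact Measure.integrableOn_of_bounded measure_Ioc_lt_top.ne
      (meas_g μ).aestronglyMeasurable (ae_of_all _ fun t => bdd_g μ t)
  have ptwise : ∀ t ∈ Ioc (0:ℝ) 1,
      (P {a | t ≤ φ a}).toReal ≤ (Q {a | t ≤ φ a}).toReal + tvDist P Q := by
    intro t _
    have hAm : MeasurableSet {a | t ≤ φ a} := hm measurableSet_Ici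
    have := (abs_le.1 (le_tvDist P Q hAm)).2.trans (le_refl _)
    have h2 := (le_abs_self ((P {a | t ≤ φ a}).toReal - (Q {a | t ≤ φ a}).toReal)).trans
      (le_tvDist P Q hAm)
    linarith
  calc ∫ t in Ioc (0:ℝ) 1, (P {a | t ≤ φ a}).toReal
      ≤ ∫ t in Ioc (0:ℝ) 1, ((Q {a | t ≤ φ a}).toReal + tvDist P Q) := by
        exact setIntegral_mono_on (int_g P)
          ((int_g Q).add (integrableOn_const (C := tvDist P Q) measure_Ioc_lt_top.ne))
          measurableSet_Ioc ptwise
    _ = (∫ t in Ioc (0:ℝ) 1, (Q {a | t ≤ φ a}).toReal) + tvDist P Q := by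
        rw [integral_add (int_g Q) (integrableOn_const (C := tvDist P Q) measure_Ioc_lt_top.ne)]
        simp [Real.volume_Ioc]

lemma tradeoff_bddBelow (P Q : Measure Ω) [IsProbabilityMeasure P] [IsProbabilityMeasure Q]
    (α : ℝ) : BddBelow { r : ℝ | ∃ φ : Ω → ℝ, Measurable φ ∧ (∀ x, φ x ∈ Icc (0:ℝ) 1) ∧
      1 - α ≤ ∫ x, φ x ∂P ∧ r = 1 - ∫ x, φ x ∂Q } := by
  refine ⟨0, ?_⟩
  rintro r ⟨ψ, hψm, hψ, -, rfl⟩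
  linarith [test_integral_le_one Q hψm hψ]

lemma tradeoff_le_of_test (P Q : Measure Ω) [IsProbabilityMeasure P] [IsProbabilityMeasure Q]
    (α : ℝ) {φ : Ω → ℝ} (hm : Measurable φ) (hφ : ∀ x, φ x ∈ Icc (0:ℝ) 1)
    (hfe : 1 - α ≤ ∫ x, φ x ∂P) : tradeoff P Q α ≤ 1 - ∫ x, φ x ∂Q :=
  csInf_le (tradeoff_bddBelow P Q α) ⟨φ, hm, hφ, hfe, rfl⟩

end AuxTV

theorem stmt15 {D : Type*} {Ω : Type*} [MeasurableSpace Ω]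
    (adj : D → D → Prop) (hadj : ∀ a b, adj a b → adj b a)
    (f : ℝ → ℝ) (hf : IsTradeoff f)
    (M : ℕ → D → Measure Ω) (Ml : D → Measure Ω)
    [∀ n dd, IsProbabilityMeasure (M n dd)] [∀ dd, IsProbabilityMeasure (Ml dd)]
    (hDP : ∀ n, ∀ d₁ d₂, adj d₁ d₂ →
      ∀ α ∈ Icc (0:ℝ) 1, f α ≤ tradeoff (M n d₁) (M n d₂) α)
    (hconv : ∀ dd, Tendsto (fun n => tvDist (M n dd) (Ml dd)) atTop (nhds 0)) :
    ∀ d₁ d₂, adj d₁ d₂ → ∀ α ∈ Icc (0:ℝ) 1, f α ≤ tradeoff (Ml d₁) (Ml d₂) α := by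
  intro d₁ d₂ hadj12 α hα
  apply le_csInf
  · refine ⟨0, fun _ => 1, measurable_const, fun x => ⟨zero_le_one, le_refl 1⟩, ?_, ?_⟩
    · simp only [integral_const, probReal_univ, smul_eq_mul, one_mul]
      linarith [hα.1]
    · simp [integral_const]
  rintro r ⟨φ, hm, hφ, hfe, rfl⟩
  set a : ℕ → ℝ := fun n => tvDist (M n d₁) (Ml d₁) with ha_def
  set b : ℕ → ℝ := fun n => tvDist (M n d₂) (Ml d₂) with hb_def
  have ha0 : ∀ n, 0 ≤ a n := fun n => tvDist_nonneg _ _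
  have key : ∀ n, f (min (α + a n) 1) ≤ (1 - ∫ x, φ x ∂(Ml d₂)) + b n := by
    intro n
    set β := min (α + a n) 1 with hβ_def
    have hβ : β ∈ Icc (0:ℝ) 1 :=
      ⟨le_min (by linarith [hα.1, ha0 n]) zero_le_one, min_le_right _ _⟩
    have h1 : ∫ x, φ x ∂(Ml d₁) ≤ (∫ x, φ x ∂(M n d₁)) + a n := by
      have := integral_le_add_tvDist (Ml d₁) (M n d₁) hm hφ
      rwa [tvDist_comm] at this
    have h0 : 0 ≤ ∫ x, φ x ∂(M n d₁) := integral_nonneg fun x => (hφ x).1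
    have hfeas : 1 - β ≤ ∫ x, φ x ∂(M n d₁) := by
      rcases le_total (α + a n) 1 with hc | hc
      · rw [hβ_def, min_eq_left hc]; linarith
      · rw [hβ_def, min_eq_right hc]; linarith
    have h2 : ∫ x, φ x ∂(Ml d₂) ≤ (∫ x, φ x ∂(M n d₂)) + b n := by
      have := integral_le_add_tvDist (Ml d₂) (M n d₂) hm hφ
      rwa [tvDist_comm] at this
    calc f β ≤ tradeoff (M n d₁) (M n d₂) β := hDP n d₁ d₂ hadj12 β hβ
      _ ≤ 1 - ∫ x, φ x ∂(M n d₂) := tradeoff_le_of_test _ _ β hm hφ hfeas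
      _ ≤ (1 - ∫ x, φ x ∂(Ml d₂)) + b n := by linarith
  have hmin : Tendsto (fun n => min (α + a n) 1) atTop (nhds α) := by
    have h : Tendsto (fun n => min (α + a n) 1) atTop (nhds (min (α + 0) 1)) :=
      (tendsto_const_nhds.add (hconv d₁)).min tendsto_const_nhds
    simpa [min_eq_left hα.2] using h
  have hfc : Tendsto (fun n => f (min (α + a n) 1)) atTop (nhds (f α)) := by
    refine (hf.2.1 α hα).tendsto.comp ?_
    refine tendsto_nhdsWithin_of_tendsto_nhds_of_eventually_within _ hmin ?_
    exact Eventually.of_forall fun n =>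
      ⟨le_min (by linarith [hα.1, ha0 n]) zero_le_one, min_le_right _ _⟩
  have hrhs : Tendsto (fun n => (1 - ∫ x, φ x ∂(Ml d₂)) + b n) atTop
      (nhds (1 - ∫ x, φ x ∂(Ml d₂))) := by
    have h := tendsto_const_nhds (x := 1 - ∫ x, φ x ∂(Ml d₂)) (f := atTop (α := ℕ)) |>.add
      (hconv d₂)
    simpa [hb_def] using h
  exact le_of_tendsto_of_tendsto' hfc hrhs key
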